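/- Fix real θ > 0, α > −1, set α' = (α+1)/θ − 1 and θ' = 1/θ. For every integer n ≥ 1 and all nonzero real numbers x_1,…,x_n, setting u_i = sign(x_i)·|x_i|^{1/θ}, one has ∏_{i=1}^n |u_i|^α · det[𝒦^{Her(α,θ)}(u_i,u_j)]_{i,j=1}^n · ∏_{i=1}^n (1/θ)|x_i|^{1/θ−1} = ∏_{i=1}^n |x_i|^{α'} · det[𝒦^{Her(α',θ')}(x_i,x_j)]_{i,j=1}^n. In other words, the limit correlation measures ∏_i |x_i|^α det[𝒦^{Her(α,θ)}(x_i,x_j)] dx_1⋯dx_n of the biorthogonal Hermite ensemble are invariant under the change of parameters (α,θ) ↦ ((α+1)/θ−1, 1/θ) combined with the transformation x ↦ sign(x)|x|^{1/θ} of the phase space ℝ. -/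
import Mathlib


/-- Signed power: `x^θ := sign(x)·|x|^θ`. -/
noncomputable def sgnPow (x θ : ℝ) : ℝ := Real.sign x * |x| ^ θ

/-- The limit kernel `𝒦^{(α,θ)}(x,y)` of the biorthogonal Jacobi/Laguerre ensembles. -/
noncomputable def limitKernel (α θ x y : ℝ) : ℝ :=
  ∑' k : ℕ, ∑' l : ℕ,
    ((-1) ^ k * x ^ k / ((Nat.factorial k : ℝ) * Real.Gamma ((α + 1 + k) / θ))) *
      ((-1) ^ l * y ^ (θ * (l : ℝ)) /
        ((Nat.factorial l : ℝ) * Real.Gamma (α + 1 + θ * l))) *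
      (θ / (α + 1 + k + θ * l))

/-- The Hermite limit kernel `𝒦^{Her(α,θ)}(x,y) = 𝒦^{((α-1)/2,θ)}(x²,y²) +
x^θ y · 𝒦^{((α+θ)/2,θ)}(x²,y²)`. -/
noncomputable def hermiteLimitKernel (α θ x y : ℝ) : ℝ :=
  limitKernel ((α - 1) / 2) θ (x ^ 2) (y ^ 2) +
    sgnPow x θ * y * limitKernel ((α + θ) / 2) θ (x ^ 2) (y ^ 2)

/- ### Auxiliary lemmas -/

lemma one_le_Gamma_aux {s : ℝ} (hs : 2 ≤ s) : 1 ≤ Real.Gamma s := by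
  rcases eq_or_lt_of_le hs with h | h
  · rw [← h, Real.Gamma_two]
  · rw [← Real.Gamma_two]
    exact (Real.Gamma_strictMonoOn_Ici Set.self_mem_Ici (Set.mem_Ici.mpr hs) h).le

lemma summable_aux {a d : ℝ} (ha : 0 < a) (hd : 0 < d) (x : ℝ) (hx : 0 ≤ x) :
    Summable (fun k : ℕ => x ^ k / ((Nat.factorial k : ℝ) * Real.Gamma (a + d * k))) := by
  obtain ⟨N, hN⟩ : ∃ N : ℕ, 2 ≤ a + d * N := by
    obtain ⟨N, hN⟩ := exists_nat_ge (2 / d)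
    refine ⟨N, ?_⟩
    have : 2 / d ≤ (N : ℝ) := hN
    have h2 : 2 ≤ d * N := by
      rw [div_le_iff₀ hd] at this; linarith [this]
    linarith
  rw [← summable_nat_add_iff N]
  have hΓpos : ∀ k : ℕ, 0 < Real.Gamma (a + d * k) := fun k =>
    Real.Gamma_pos_of_pos (by
      have : (0:ℝ) ≤ d * k := mul_nonneg hd.le (Nat.cast_nonneg k); linarith)
  apply Summable.of_nonneg_of_le
    (g := fun k : ℕ => x ^ (k + N) / ((Nat.factorial (k + N) : ℝ) * Real.Gamma (a + d * ↑(k + N))))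
    (f := fun k : ℕ => x ^ N * (x ^ k / (Nat.factorial k : ℝ)))
  · intro k
    exact div_nonneg (pow_nonneg hx _)
      (mul_nonneg (Nat.cast_nonneg _) (hΓpos (k + N)).le)
  · intro k
    have hΓ1 : 1 ≤ Real.Gamma (a + d * ↑(k + N)) := by
      apply one_le_Gamma_aux
      have h1 : (0:ℝ) ≤ d * k := mul_nonneg hd.le (Nat.cast_nonneg k)
      push_cast
      nlinarith
    have hfac : ((Nat.factorial k : ℝ)) ≤ (Nat.factorial (k + N) : ℝ) :=
      Nat.cast_le.mpr (Nat.factorial_le (Nat.le_add_right k N))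
    have hfacpos : (0:ℝ) < (Nat.factorial k : ℝ) := by exact_mod_cast k.factorial_pos
    calc x ^ (k + N) / ((Nat.factorial (k + N) : ℝ) * Real.Gamma (a + d * ↑(k + N)))
        ≤ x ^ (k + N) / ((Nat.factorial k : ℝ) * 1) := by
          apply div_le_div_of_nonneg_left (pow_nonneg hx _) (by linarith)
          calc (Nat.factorial k : ℝ) * 1 ≤ (Nat.factorial (k + N) : ℝ) * 1 := by
                linarith
            _ ≤ (Nat.factorial (k + N) : ℝ) * Real.Gamma (a + d * ↑(k + N)) := by
                have : (0:ℝ) ≤ (Nat.factorial (k+N) : ℝ) := Nat.cast_nonneg _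
                nlinarith
      _ = x ^ N * (x ^ k / (Nat.factorial k : ℝ)) := by rw [mul_one, pow_add]; ring
  · exact (Real.summable_pow_div_factorial x).mul_left (x ^ N)

/-- The summand of `limitKernel`, as a function on `ℕ × ℕ`. -/
noncomputable def gterm (α θ x y : ℝ) (p : ℕ × ℕ) : ℝ :=
  ((-1) ^ p.1 * x ^ p.1 / ((Nat.factorial p.1 : ℝ) * Real.Gamma ((α + 1 + p.1) / θ))) *
    ((-1) ^ p.2 * y ^ (θ * (p.2 : ℝ)) /
      ((Nat.factorial p.2 : ℝ) * Real.Gamma (α + 1 + θ * p.2))) *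
    (θ / (α + 1 + p.1 + θ * p.2))

lemma limitKernel_eq (α θ x y : ℝ) :
    limitKernel α θ x y = ∑' k : ℕ, ∑' l : ℕ, gterm α θ x y (k, l) := rfl

lemma summable_gterm {α θ x y : ℝ} (hθ : 0 < θ) (hα : -1 < α) (hx : 0 ≤ x) (hy : 0 ≤ y) :
    Summable (gterm α θ x y) := by
  have hα1 : (0:ℝ) < α + 1 := by linarith
  have hΓ1 : ∀ k : ℕ, 0 < Real.Gamma ((α + 1 + k) / θ) := fun k =>
    Real.Gamma_pos_of_pos (div_pos (by
      have : (0:ℝ) ≤ (k:ℝ) := Nat.cast_nonneg k; linarith) hθ)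
  have hΓ2 : ∀ l : ℕ, 0 < Real.Gamma (α + 1 + θ * l) := fun l =>
    Real.Gamma_pos_of_pos (by
      have : (0:ℝ) ≤ θ * (l:ℝ) := mul_nonneg hθ.le (Nat.cast_nonneg l); linarith)
  have hF : Summable (fun k : ℕ =>
      x ^ k / ((Nat.factorial k : ℝ) * Real.Gamma ((α + 1 + k) / θ)) * (θ / (α + 1))) := by
    refine ((summable_aux (div_pos hα1 hθ) (one_div_pos.mpr hθ) x hx).mul_right
      (θ / (α + 1))).congr (fun k => ?_)
    rw [show (α + 1) / θ + 1 / θ * (k:ℝ) = (α + 1 + k) / θ from by ring]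
  have hG : Summable (fun l : ℕ =>
      y ^ (θ * (l : ℝ)) / ((Nat.factorial l : ℝ) * Real.Gamma (α + 1 + θ * l))) := by
    refine (summable_aux hα1 hθ (y ^ (θ:ℝ)) (Real.rpow_nonneg hy θ)).congr (fun l => ?_)
    rw [show ((y ^ (θ:ℝ)) ^ l : ℝ) = y ^ (θ * (l:ℝ)) from by
      rw [← Real.rpow_natCast (y ^ (θ:ℝ)) l, ← Real.rpow_mul hy]]
  have hFG : Summable (fun p : ℕ × ℕ =>
      (x ^ p.1 / ((Nat.factorial p.1 : ℝ) * Real.Gamma ((α + 1 + p.1) / θ)) * (θ / (α + 1))) *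
      (y ^ (θ * (p.2 : ℝ)) / ((Nat.factorial p.2 : ℝ) * Real.Gamma (α + 1 + θ * p.2)))) :=
    hF.mul_of_nonneg hG
      (fun k => mul_nonneg (div_nonneg (pow_nonneg hx _)
        (mul_nonneg (Nat.cast_nonneg _) (hΓ1 k).le)) (div_nonneg hθ.le hα1.le))
      (fun l => div_nonneg (Real.rpow_nonneg hy _)
        (mul_nonneg (Nat.cast_nonneg _) (hΓ2 l).le))
  refine summable_abs_iff.mp (Summable.of_nonneg_of_le (fun p => abs_nonneg _)
    (fun p => ?_) hFG)
  obtain ⟨k, l⟩ := p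
  have hden : (0:ℝ) < α + 1 + k + θ * l := by
    have h1 : (0:ℝ) ≤ (k:ℝ) := Nat.cast_nonneg k
    have h2 : (0:ℝ) ≤ θ * (l:ℝ) := mul_nonneg hθ.le (Nat.cast_nonneg l)
    linarith
  have hA0 : (0:ℝ) ≤ x ^ k / ((Nat.factorial k : ℝ) * Real.Gamma ((α + 1 + k) / θ)) :=
    div_nonneg (pow_nonneg hx _) (mul_nonneg (Nat.cast_nonneg _) (hΓ1 k).le)
  have hB0 : (0:ℝ) ≤ y ^ (θ * (l:ℝ)) / ((Nat.factorial l : ℝ) * Real.Gamma (α + 1 + θ * l)) :=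
    div_nonneg (Real.rpow_nonneg hy _) (mul_nonneg (Nat.cast_nonneg _) (hΓ2 l).le)
  have eA : |(-1:ℝ) ^ k * x ^ k / ((Nat.factorial k : ℝ) * Real.Gamma ((α + 1 + k) / θ))|
      = x ^ k / ((Nat.factorial k : ℝ) * Real.Gamma ((α + 1 + k) / θ)) := by
    rw [mul_div_assoc, abs_mul, abs_pow, abs_neg, abs_one, one_pow, one_mul,
      abs_of_nonneg hA0]
  have eB : |(-1:ℝ) ^ l * y ^ (θ * (l:ℝ)) /
        ((Nat.factorial l : ℝ) * Real.Gamma (α + 1 + θ * l))|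
      = y ^ (θ * (l:ℝ)) / ((Nat.factorial l : ℝ) * Real.Gamma (α + 1 + θ * l)) := by
    rw [mul_div_assoc, abs_mul, abs_pow, abs_neg, abs_one, one_pow, one_mul,
      abs_of_nonneg hB0]
  have eC : |θ / (α + 1 + (k:ℝ) + θ * l)| = θ / (α + 1 + k + θ * l) :=
    abs_of_nonneg (div_nonneg hθ.le hden.le)
  have hC : θ / (α + 1 + (k:ℝ) + θ * l) ≤ θ / (α + 1) := by
    apply div_le_div_of_nonneg_left hθ.le hα1
    have h1 : (0:ℝ) ≤ (k:ℝ) := Nat.cast_nonneg k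
    have h2 : (0:ℝ) ≤ θ * (l:ℝ) := mul_nonneg hθ.le (Nat.cast_nonneg l)
    linarith
  show |gterm α θ x y (k, l)| ≤ _
  unfold gterm
  rw [abs_mul, abs_mul]
  dsimp only
  rw [eA, eB, eC]
  calc x ^ k / ((Nat.factorial k : ℝ) * Real.Gamma ((α + 1 + k) / θ)) *
        (y ^ (θ * (l:ℝ)) / ((Nat.factorial l : ℝ) * Real.Gamma (α + 1 + θ * l))) *
        (θ / (α + 1 + k + θ * l))
      ≤ x ^ k / ((Nat.factorial k : ℝ) * Real.Gamma ((α + 1 + k) / θ)) *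
        (y ^ (θ * (l:ℝ)) / ((Nat.factorial l : ℝ) * Real.Gamma (α + 1 + θ * l))) *
        (θ / (α + 1)) := mul_le_mul_of_nonneg_left hC (mul_nonneg hA0 hB0)
    _ = x ^ k / ((Nat.factorial k : ℝ) * Real.Gamma ((α + 1 + k) / θ)) * (θ / (α + 1)) *
        (y ^ (θ * (l:ℝ)) / ((Nat.factorial l : ℝ) * Real.Gamma (α + 1 + θ * l))) := by ring

lemma gterm_swap {α θ a b : ℝ} (hθ : 0 < θ) (hα : -1 < α) (ha : 0 ≤ a) (hb : 0 ≤ b)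
    (k l : ℕ) :
    gterm α θ (a ^ (1/θ : ℝ)) (b ^ (1/θ : ℝ)) (k, l)
      = θ * gterm ((α + 1) / θ - 1) (1/θ) b a (l, k) := by
  have hθ0 : θ ≠ 0 := hθ.ne'
  have hden : (0:ℝ) < α + 1 + k + θ * l := by
    have h1 : (0:ℝ) ≤ (k:ℝ) := Nat.cast_nonneg k
    have h2 : (0:ℝ) ≤ θ * (l:ℝ) := mul_nonneg hθ.le (Nat.cast_nonneg l)
    linarith
  have hden0 : (α + 1 + (k:ℝ) + θ * l) ≠ 0 := hden.ne'
  have h1 : (a ^ (1/θ : ℝ)) ^ k = a ^ (1/θ * (k:ℝ)) := by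
    rw [← Real.rpow_natCast (a ^ (1/θ : ℝ)) k, ← Real.rpow_mul ha]
  have h2 : (b ^ (1/θ : ℝ)) ^ (θ * (l:ℝ)) = b ^ l := by
    rw [← Real.rpow_mul hb, show 1/θ * (θ * (l:ℝ)) = (l:ℝ) from by field_simp,
      Real.rpow_natCast]
  have g1 : (α + 1 + (k:ℝ)) / θ = (α + 1) / θ - 1 + 1 + 1/θ * (k:ℝ) := by ring
  have g2 : α + 1 + θ * (l:ℝ) = ((α + 1) / θ - 1 + 1 + (l:ℝ)) / (1/θ) := by
    field_simp
    ring
  have g3 : θ / (α + 1 + (k:ℝ) + θ * l)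
      = θ * (1/θ / ((α + 1) / θ - 1 + 1 + (l:ℝ) + 1/θ * (k:ℝ))) := by
    rw [show (α + 1) / θ - 1 + 1 + (l:ℝ) + 1/θ * (k:ℝ) = (α + 1 + (k:ℝ) + θ * l) / θ from by
      field_simp; ring]
    rw [div_div_eq_mul_div, one_div_mul_cancel hθ0, mul_one_div]
  unfold gterm
  dsimp only
  rw [h1, h2, g1, g2, g3]
  ring

set_option maxHeartbeats 1000000 in
lemma limitKernel_swap {α θ a b : ℝ} (hθ : 0 < θ) (hα : -1 < α) (ha : 0 ≤ a) (hb : 0 ≤ b) :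
    limitKernel α θ (a ^ (1/θ : ℝ)) (b ^ (1/θ : ℝ))
      = θ * limitKernel ((α + 1) / θ - 1) (1/θ) b a := by
  have hα' : -1 < (α + 1) / θ - 1 := by
    have : 0 < (α + 1) / θ := div_pos (by linarith) hθ
    linarith
  have hθ' : (0:ℝ) < 1/θ := by positivity
  have hs : Summable (gterm ((α + 1) / θ - 1) (1/θ) b a) := summable_gterm hθ' hα' hb ha
  calc limitKernel α θ (a ^ (1/θ : ℝ)) (b ^ (1/θ : ℝ))
      = ∑' k : ℕ, ∑' l : ℕ, θ * gterm ((α + 1) / θ - 1) (1/θ) b a (l, k) := by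
        rw [limitKernel_eq]
        exact tsum_congr fun k => tsum_congr fun l => gterm_swap hθ hα ha hb k l
    _ = θ * ∑' k : ℕ, ∑' l : ℕ, gterm ((α + 1) / θ - 1) (1/θ) b a (l, k) := by
        simp_rw [tsum_mul_left]
    _ = θ * ∑' l : ℕ, ∑' k : ℕ, gterm ((α + 1) / θ - 1) (1/θ) b a (l, k) := by
        rw [Summable.tsum_comm' (f := fun l k : ℕ => gterm ((α + 1) / θ - 1) (1/θ) b a (l, k)) hs
          hs.prod_factor hs.prod_symm.prod_factor]
    _ = θ * limitKernel ((α + 1) / θ - 1) (1/θ) b a := by rw [limitKernel_eq]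

lemma sign_sq {x : ℝ} (hx : x ≠ 0) : (Real.sign x) ^ 2 = 1 := by
  rcases Real.sign_apply_eq_of_ne_zero x hx with h | h <;> rw [h] <;> norm_num

lemma sgnPow_sq {x : ℝ} (hx : x ≠ 0) (p : ℝ) : (sgnPow x p) ^ 2 = (x ^ 2) ^ (p : ℝ) := by
  have h1 : (sgnPow x p) ^ 2 = (|x| ^ (p:ℝ)) ^ (2:ℕ) := by
    rw [sgnPow, mul_pow, sign_sq hx, one_mul]
  rw [h1, ← Real.rpow_natCast (|x| ^ (p:ℝ)) 2, ← Real.rpow_mul (abs_nonneg x),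
    ← sq_abs x, ← Real.rpow_natCast |x| 2, ← Real.rpow_mul (abs_nonneg x),
    mul_comm p ((2:ℕ):ℝ)]

lemma sgnPow_sgnPow {x θ : ℝ} (hx : x ≠ 0) (hθ : 0 < θ) :
    sgnPow (sgnPow x (1/θ)) θ = x := by
  have hθ0 : θ ≠ 0 := hθ.ne'
  set r : ℝ := |x| ^ ((1/θ):ℝ) with hrdef
  have hr : 0 < r := Real.rpow_pos_of_pos (abs_pos.mpr hx) _
  have key : r ^ (θ:ℝ) = |x| := by
    rw [hrdef, ← Real.rpow_mul (abs_nonneg x), one_div, inv_mul_cancel₀ hθ0, Real.rpow_one]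
  rcases lt_or_gt_of_ne hx with h | h
  · have h1 : sgnPow x (1/θ) = -r := by rw [sgnPow, Real.sign_of_neg h]; ring
    rw [h1, sgnPow, Real.sign_of_neg (by linarith : -r < 0), abs_neg, abs_of_pos hr, key,
      abs_of_neg h]
    ring
  · have h1 : sgnPow x (1/θ) = r := by rw [sgnPow, Real.sign_of_pos h, one_mul]
    rw [h1, sgnPow, Real.sign_of_pos hr, abs_of_pos hr, key, one_mul, abs_of_pos h]

lemma hermite_swap {α θ : ℝ} (hθ : 0 < θ) (hα : -1 < α) {x y : ℝ} (hx : x ≠ 0) (hy : y ≠ 0) :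
    hermiteLimitKernel α θ (sgnPow x (1/θ)) (sgnPow y (1/θ))
      = θ * hermiteLimitKernel ((α + 1) / θ - 1) (1/θ) y x := by
  have hθ0 : θ ≠ 0 := hθ.ne'
  unfold hermiteLimitKernel
  rw [sgnPow_sq hx, sgnPow_sq hy, sgnPow_sgnPow hx hθ,
    limitKernel_swap hθ (by linarith : -1 < (α - 1) / 2) (sq_nonneg x) (sq_nonneg y),
    limitKernel_swap hθ (by linarith : -1 < (α + θ) / 2) (sq_nonneg x) (sq_nonneg y),
    show ((α - 1) / 2 + 1) / θ - 1 = ((α + 1) / θ - 1 - 1) / 2 from by field_simp; ring,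
    show ((α + θ) / 2 + 1) / θ - 1 = ((α + 1) / θ - 1 + 1/θ) / 2 from by field_simp; ring]
  ring

/-- **Invariance of the limit correlation measures of the biorthogonal Hermite
ensemble** under `(α,θ) ↦ ((α+1)/θ - 1, 1/θ)` combined with
`x ↦ sign(x)|x|^{1/θ}`. -/
theorem hermite_limit_measure_invariance (θ α : ℝ) (hθ : 0 < θ) (hα : -1 < α)
    (n : ℕ) (hn : 1 ≤ n) (x : Fin n → ℝ) (hx : ∀ i, x i ≠ 0) :
    (∏ i, |sgnPow (x i) (1 / θ)| ^ α) *
        Matrix.det (Matrix.of fun i j : Fin n =>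
          hermiteLimitKernel α θ (sgnPow (x i) (1 / θ)) (sgnPow (x j) (1 / θ))) *
        (∏ i, (1 / θ) * |x i| ^ (1 / θ - 1))
      = (∏ i, |x i| ^ ((α + 1) / θ - 1)) *
          Matrix.det (Matrix.of fun i j : Fin n =>
            hermiteLimitKernel ((α + 1) / θ - 1) (1 / θ) (x i) (x j)) := by
  have hθ0 : θ ≠ 0 := hθ.ne'
  have hdet : Matrix.det (Matrix.of fun i j : Fin n =>
        hermiteLimitKernel α θ (sgnPow (x i) (1 / θ)) (sgnPow (x j) (1 / θ)))
      = θ ^ n * Matrix.det (Matrix.of fun i j : Fin n =>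
        hermiteLimitKernel ((α + 1) / θ - 1) (1 / θ) (x i) (x j)) := by
    have hM : (Matrix.of fun i j : Fin n =>
          hermiteLimitKernel α θ (sgnPow (x i) (1 / θ)) (sgnPow (x j) (1 / θ)))
        = θ • (Matrix.of fun i j : Fin n =>
          hermiteLimitKernel ((α + 1) / θ - 1) (1 / θ) (x i) (x j)).transpose := by
      ext i j
      simp only [Matrix.of_apply, Matrix.smul_apply, Matrix.transpose_apply, smul_eq_mul]
      exact hermite_swap hθ hα (hx i) (hx j)
    rw [hM, Matrix.det_smul, Matrix.det_transpose, Fintype.card_fin]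
  have hcomb : ∀ i, |sgnPow (x i) (1 / θ)| ^ α * |x i| ^ (1 / θ - 1 : ℝ)
      = |x i| ^ ((α + 1) / θ - 1 : ℝ) := by
    intro i
    have habs : |sgnPow (x i) (1 / θ)| = |x i| ^ ((1/θ):ℝ) := by
      unfold sgnPow
      rw [abs_mul, abs_of_nonneg (Real.rpow_nonneg (abs_nonneg _) _)]
      rcases Real.sign_apply_eq_of_ne_zero (x i) (hx i) with h | h <;> rw [h] <;> norm_num
    rw [habs, ← Real.rpow_mul (abs_nonneg _), ← Real.rpow_add (abs_pos.mpr (hx i))]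
    congr 1
    field_simp
    ring
  have hprod : (∏ i, |sgnPow (x i) (1 / θ)| ^ α) * (∏ i, |x i| ^ (1 / θ - 1 : ℝ))
      = ∏ i, |x i| ^ ((α + 1) / θ - 1 : ℝ) := by
    rw [← Finset.prod_mul_distrib]
    exact Finset.prod_congr rfl fun i _ => hcomb i
  rw [hdet, Finset.prod_mul_distrib, Finset.prod_const, Finset.card_univ, Fintype.card_fin,
    ← hprod]
  set P := ∏ i, |sgnPow (x i) (1 / θ)| ^ α with hP
  set Q := ∏ i, |x i| ^ (1 / θ - 1 : ℝ) with hQ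
  set D := Matrix.det (Matrix.of fun i j : Fin n =>
    hermiteLimitKernel ((α + 1) / θ - 1) (1 / θ) (x i) (x j)) with hD
  have hpow : θ ^ n * (1 / θ) ^ n = 1 := by
    rw [← mul_pow, mul_one_div_cancel hθ0, one_pow]
  calc P * (θ ^ n * D) * ((1 / θ) ^ n * Q)
      = θ ^ n * (1 / θ) ^ n * (P * Q * D) := by ring
    _ = P * Q * D := by rw [hpow, one_mul]
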